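/- arXiv:2411.02961 — 4 statements merged into one kernel-verified Lean document; each statement's English description precedes it below -/
import Mathlib

section
/- For all integers n and k with 2 ≤ k ≤ n−2, the product P := ∏_{i=k}^{n−2} (2i)/(2i+1) satisfies √((2n−1)/(2k+1)) · k/(n−1) ≤ P ≤ √(k/(n−1)). -/
lemma aux5 (k : ℕ) (hk : 1 ≤ k) : ∀ m : ℕ, k ≤ m →
    ((2 * (m : ℝ) + 3) / (2 * (k : ℝ) + 1)) * ((k : ℝ) ^ 2 / ((m : ℝ) + 1) ^ 2) ≤
      (∏ i ∈ Finset.Icc k m, (2 * (i : ℝ)) / (2 * (i : ℝ) + 1)) ^ 2 ∧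
    (∏ i ∈ Finset.Icc k m, (2 * (i : ℝ)) / (2 * (i : ℝ) + 1)) ^ 2 ≤ (k : ℝ) / ((m : ℝ) + 1) := by
  intro m hm
  induction m, hm using Nat.le_induction with
  | base =>
      rw [Finset.Icc_self, Finset.prod_singleton]
      have hK : (1 : ℝ) ≤ (k : ℝ) := by exact_mod_cast hk
      constructor
      · rw [div_mul_div_comm, div_pow, div_le_div_iff₀ (by positivity) (by positivity)]
        nlinarith [sq_nonneg ((k:ℝ)), sq_nonneg ((k:ℝ)+1)]
      · rw [div_pow, div_le_div_iff₀ (by positivity) (by positivity)]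
        nlinarith
  | succ m hm IH =>
      have hIH := IH
      rw [Finset.prod_Icc_succ_top (by omega)]
      have hK : (1 : ℝ) ≤ (k : ℝ) := by exact_mod_cast hk
      have hM : (k : ℝ) ≤ (m : ℝ) := by exact_mod_cast hm
      have hPnn : (0 : ℝ) ≤ ∏ i ∈ Finset.Icc k m, (2 * (i : ℝ)) / (2 * (i : ℝ) + 1) := by
        apply Finset.prod_nonneg
        intro i _
        positivity
      push_cast
      rw [mul_pow]
      set P := ∏ i ∈ Finset.Icc k m, (2 * (i : ℝ)) / (2 * (i : ℝ) + 1) with hP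
      set M : ℝ := (m : ℝ) with hMdef
      have hM0 : (0 : ℝ) ≤ M := by positivity
      constructor
      · calc (2 * (M + 1) + 3) / (2 * (k : ℝ) + 1) * ((k : ℝ) ^ 2 / (M + 1 + 1) ^ 2)
            ≤ ((2 * M + 3) / (2 * (k : ℝ) + 1) * ((k : ℝ) ^ 2 / (M + 1) ^ 2)) *
              ((2 * (M + 1)) / (2 * (M + 1) + 1)) ^ 2 := by
              rw [div_mul_div_comm, div_pow, div_mul_div_comm, div_mul_div_comm,
                div_le_div_iff₀ (by positivity) (by positivity)]
              nlinarith [sq_nonneg ((k:ℝ)*(M+1)), sq_nonneg ((k:ℝ)*M), mul_pos (lt_of_lt_of_le one_pos hK) (by positivity : (0:ℝ) < (M+1)^2)]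
          _ ≤ P ^ 2 * ((2 * (M + 1)) / (2 * (M + 1) + 1)) ^ 2 := by
              apply mul_le_mul_of_nonneg_right hIH.1 (by positivity)
      · calc P ^ 2 * ((2 * (M + 1)) / (2 * (M + 1) + 1)) ^ 2
            ≤ ((k : ℝ) / (M + 1)) * ((M + 1) / (M + 1 + 1)) := by
              apply mul_le_mul hIH.2 ?_ (by positivity) (by positivity)
              rw [div_pow, div_le_div_iff₀ (by positivity) (by positivity)]
              nlinarith
          _ = (k : ℝ) / (M + 1 + 1) := by
              rw [div_mul_div_comm]
              rw [div_eq_div_iff (by positivity) (by positivity)]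
              ring

/-- Bounds on the product `∏_{i=k}^{n-2} (2i)/(2i+1)`:
`√((2n−1)/(2k+1)) · k/(n−1) ≤ P ≤ √(k/(n−1))`. -/
theorem statement5 (n k : ℕ) (hk : 2 ≤ k) (hkn : k ≤ n - 2) :
    Real.sqrt ((2 * (n : ℝ) - 1) / (2 * (k : ℝ) + 1)) * (k : ℝ) / ((n : ℝ) - 1) ≤
      (∏ i ∈ Finset.Icc k (n - 2), (2 * (i : ℝ)) / (2 * (i : ℝ) + 1)) ∧
    (∏ i ∈ Finset.Icc k (n - 2), (2 * (i : ℝ)) / (2 * (i : ℝ) + 1)) ≤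
      Real.sqrt ((k : ℝ) / ((n : ℝ) - 1)) := by
  obtain ⟨m, rfl⟩ : ∃ m, n = m + 2 := ⟨n - 2, by omega⟩
  have hkm : k ≤ m := by omega
  have h := aux5 k (by omega) m hkm
  have hsimp : m + 2 - 2 = m := by omega
  rw [hsimp] at *
  have hK : (1 : ℝ) ≤ (k : ℝ) := by exact_mod_cast (by omega : 1 ≤ k)
  have hM : (k : ℝ) ≤ (m : ℝ) := by exact_mod_cast hkm
  have hPnn : (0 : ℝ) ≤ ∏ i ∈ Finset.Icc k m, (2 * (i : ℝ)) / (2 * (i : ℝ) + 1) := by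
    apply Finset.prod_nonneg; intro i _; positivity
  set P := ∏ i ∈ Finset.Icc k m, (2 * (i : ℝ)) / (2 * (i : ℝ) + 1) with hP
  push_cast
  have h1 : 2 * ((m : ℝ) + 2) - 1 = 2 * (m : ℝ) + 3 := by ring
  have h2 : (m : ℝ) + 2 - 1 = (m : ℝ) + 1 := by ring
  rw [h1, h2]
  constructor
  · have hL : Real.sqrt ((2 * (m : ℝ) + 3) / (2 * (k : ℝ) + 1)) * (k : ℝ) / ((m : ℝ) + 1)
        = Real.sqrt ((2 * (m : ℝ) + 3) / (2 * (k : ℝ) + 1) * ((k : ℝ) ^ 2 / ((m : ℝ) + 1) ^ 2)) := by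
      rw [Real.sqrt_mul (by positivity), ← div_pow, Real.sqrt_sq (by positivity), mul_div_assoc]
    rw [hL, show P = Real.sqrt (P ^ 2) by rw [Real.sqrt_sq hPnn]]
    exact Real.sqrt_le_sqrt h.1
  · rw [show P = Real.sqrt (P ^ 2) by rw [Real.sqrt_sq hPnn]]
    exact Real.sqrt_le_sqrt h.2
end

section
/- For all integers n and k with 2 ≤ k ≤ n−2, the exponent p_n(k) := 2 + 12/(4n − 5 + 2(k−1)·∏_{i=k}^{n−2} (2i)/(2i+1)) satisfies 2 + 12/(4n − 5 + 2(k−1)·√(k/(n−1))) ≤ p_n(k) ≤ 2 + 12/(4n − 5 + 2(k−1)·√((2n−1)/(2k+1))·k/(n−1)). -/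
lemma prod_sq_bounds (k : ℕ) (hk : 1 ≤ k) : ∀ m, k ≤ m →
    (k:ℝ)^2*(2*(m:ℝ)+3)/((2*(k:ℝ)+1)*((m:ℝ)+1)^2) ≤
      (∏ i ∈ Finset.Icc k m, (2*(i:ℝ))/(2*(i:ℝ)+1))^2 ∧
    (∏ i ∈ Finset.Icc k m, (2*(i:ℝ))/(2*(i:ℝ)+1))^2 ≤ (k:ℝ)/((m:ℝ)+1) := by
  have hk1 : (1:ℝ) ≤ (k:ℝ) := by exact_mod_cast hk
  refine Nat.le_induction ?_ ?_
  · rw [Finset.Icc_self, Finset.prod_singleton, div_pow]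
    constructor
    · rw [div_le_div_iff₀ (by positivity) (by positivity)]
      nlinarith [sq_nonneg ((k:ℝ))]
    · rw [div_le_div_iff₀ (by positivity) (by positivity)]
      nlinarith [sq_nonneg ((k:ℝ))]
  · intro m hm ih
    have hm1 : (1:ℝ) ≤ (m:ℝ) := le_trans hk1 (by exact_mod_cast hm)
    have hprod : ∏ i ∈ Finset.Icc k (m+1), (2*(i:ℝ))/(2*(i:ℝ)+1) =
        (∏ i ∈ Finset.Icc k m, (2*(i:ℝ))/(2*(i:ℝ)+1)) *
          ((2*((m:ℝ)+1))/(2*((m:ℝ)+1)+1)) := by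
      rw [Finset.prod_Icc_succ_top (by omega)]
      push_cast; ring_nf
    set Q : ℝ := ∏ i ∈ Finset.Icc k m, (2*(i:ℝ))/(2*(i:ℝ)+1)
    rw [hprod, mul_pow]
    push_cast
    have ht : (0:ℝ) ≤ ((2*((m:ℝ)+1))/(2*((m:ℝ)+1)+1))^2 := by positivity
    constructor
    · have h1 : (k:ℝ)^2*(2*((m:ℝ)+1)+3)/((2*(k:ℝ)+1)*(((m:ℝ)+1)+1)^2) ≤
          ((k:ℝ)^2*(2*(m:ℝ)+3)/((2*(k:ℝ)+1)*((m:ℝ)+1)^2)) *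
            ((2*((m:ℝ)+1))/(2*((m:ℝ)+1)+1))^2 := by
        rw [div_pow, div_mul_div_comm, div_le_div_iff₀ (by positivity) (by positivity)]
        nlinarith [mul_nonneg (mul_nonneg (mul_nonneg (sq_nonneg ((k:ℝ)))
          (by linarith : (0:ℝ) ≤ 2*(k:ℝ)+1)) (sq_nonneg ((m:ℝ)+1)))
          (by linarith : (0:ℝ) ≤ 2*(m:ℝ)+3)]
      have h2 := mul_le_mul_of_nonneg_right ih.1 ht
      linarith
    · have h2 := mul_le_mul_of_nonneg_right ih.2 ht
      have h3 : ((k:ℝ)/((m:ℝ)+1)) * ((2*((m:ℝ)+1))/(2*((m:ℝ)+1)+1))^2 ≤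
          (k:ℝ)/(((m:ℝ)+1)+1) := by
        rw [div_pow, div_mul_div_comm, div_le_div_iff₀ (by positivity) (by positivity)]
        nlinarith [sq_nonneg ((m:ℝ)), hk1]
      linarith

/-- Bounds on the exponent `p_n(k) = 2 + 12/(4n − 5 + 2(k−1)·∏_{i=k}^{n−2} (2i)/(2i+1))`. -/
theorem statement6 (n k : ℕ) (hk : 2 ≤ k) (hkn : k ≤ n - 2) :
    2 + 12 / (4 * (n : ℝ) - 5 + 2 * ((k : ℝ) - 1) * Real.sqrt ((k : ℝ) / ((n : ℝ) - 1))) ≤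
      2 + 12 / (4 * (n : ℝ) - 5 +
        2 * ((k : ℝ) - 1) * ∏ i ∈ Finset.Icc k (n - 2), (2 * (i : ℝ)) / (2 * (i : ℝ) + 1)) ∧
    2 + 12 / (4 * (n : ℝ) - 5 +
        2 * ((k : ℝ) - 1) * ∏ i ∈ Finset.Icc k (n - 2), (2 * (i : ℝ)) / (2 * (i : ℝ) + 1)) ≤
      2 + 12 / (4 * (n : ℝ) - 5 +
        2 * ((k : ℝ) - 1) * (Real.sqrt ((2 * (n : ℝ) - 1) / (2 * (k : ℝ) + 1)) *
          (k : ℝ) / ((n : ℝ) - 1))) := by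
  have hn4 : 4 ≤ n := by omega
  have hnR : (4:ℝ) ≤ (n:ℝ) := by exact_mod_cast hn4
  have hkR : (2:ℝ) ≤ (k:ℝ) := by exact_mod_cast hk
  have hcast : ((n - 2 : ℕ) : ℝ) = (n:ℝ) - 2 := by
    have h2 : (2:ℕ) ≤ n := by omega
    push_cast [Nat.cast_sub h2]; ring
  obtain ⟨hlo, hhi⟩ := prod_sq_bounds k (by omega) (n-2) hkn
  rw [hcast] at hlo hhi
  set P : ℝ := ∏ i ∈ Finset.Icc k (n - 2), (2 * (i : ℝ)) / (2 * (i : ℝ) + 1) with hP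
  have hPnn : 0 ≤ P := Finset.prod_nonneg (fun i _ => by positivity)
  have hn1 : (0:ℝ) < (n:ℝ) - 1 := by linarith
  have e1 : ((n:ℝ)-2)+1 = (n:ℝ)-1 := by ring
  have e2 : 2*((n:ℝ)-2)+3 = 2*(n:ℝ)-1 := by ring
  rw [e1] at hhi
  rw [e1, e2] at hlo
  -- upper bound on P
  have hPle : P ≤ Real.sqrt ((k:ℝ)/((n:ℝ)-1)) := by
    rw [Real.le_sqrt hPnn (by positivity)]
    exact hhi
  -- lower bound on P
  have hPge : Real.sqrt ((2*(n:ℝ)-1)/(2*(k:ℝ)+1)) * (k:ℝ) / ((n:ℝ)-1) ≤ P := by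
    have heq : Real.sqrt ((2*(n:ℝ)-1)/(2*(k:ℝ)+1)) * (k:ℝ) / ((n:ℝ)-1) =
        Real.sqrt ((k:ℝ)^2*(2*(n:ℝ)-1)/((2*(k:ℝ)+1)*((n:ℝ)-1)^2)) := by
      rw [show (k:ℝ)^2*(2*(n:ℝ)-1)/((2*(k:ℝ)+1)*((n:ℝ)-1)^2) =
          ((2*(n:ℝ)-1)/(2*(k:ℝ)+1)) * ((k:ℝ)/((n:ℝ)-1))^2 by field_simp]
      rw [Real.sqrt_mul (div_nonneg (by linarith) (by positivity)), Real.sqrt_sq (div_nonneg (by positivity) hn1.le)]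
      ring
    rw [heq]
    calc Real.sqrt ((k:ℝ)^2*(2*(n:ℝ)-1)/((2*(k:ℝ)+1)*((n:ℝ)-1)^2)) ≤
        Real.sqrt (P^2) := Real.sqrt_le_sqrt hlo
      _ = P := Real.sqrt_sq hPnn
  -- combine
  have hLnn : 0 ≤ Real.sqrt ((2*(n:ℝ)-1)/(2*(k:ℝ)+1)) * (k:ℝ) / ((n:ℝ)-1) :=
    div_nonneg (by positivity) hn1.le
  have hk1 : (0:ℝ) ≤ (k:ℝ) - 1 := by linarith
  constructor
  · have hDpos : 0 < 4*(n:ℝ) - 5 + 2*((k:ℝ)-1)*P := by nlinarith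
    have hD2 : 4*(n:ℝ) - 5 + 2*((k:ℝ)-1)*P ≤
        4*(n:ℝ) - 5 + 2*((k:ℝ)-1)*Real.sqrt ((k:ℝ)/((n:ℝ)-1)) := by nlinarith
    have := div_le_div_of_nonneg_left (by norm_num : (0:ℝ) ≤ 12) hDpos hD2
    linarith
  · have hDpos : 0 < 4*(n:ℝ) - 5 +
        2*((k:ℝ)-1)*(Real.sqrt ((2*(n:ℝ)-1)/(2*(k:ℝ)+1)) * (k:ℝ) / ((n:ℝ)-1)) := by nlinarith
    have hD2 : 4*(n:ℝ) - 5 +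
        2*((k:ℝ)-1)*(Real.sqrt ((2*(n:ℝ)-1)/(2*(k:ℝ)+1)) * (k:ℝ) / ((n:ℝ)-1)) ≤
        4*(n:ℝ) - 5 + 2*((k:ℝ)-1)*P := by nlinarith
    have := div_le_div_of_nonneg_left (by norm_num : (0:ℝ) ≤ 12) hDpos hD2
    linarith
end

section
/- Fix integers m and n with 2 ≤ m ≤ n−2. For each integer j with m ≤ j ≤ n−2 define γ_j := ((m−1)/2) · 1/(j(j−1)) · ∏_{i=m}^{j} (2i)/(2i+1), and for m−1 ≤ j ≤ n−2 define σ_j := Σ_{i=m}^{j} γ_i (so σ_{m−1} = 0). Then for every integer j with m ≤ j ≤ n−2 one has j(1 − σ_j) − (j−1)(1 − σ_{j−1}) = (1 + σ_j)/2. -/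
/-!
After substituting `σ_{j-1} = σ_j - γ_j`, the identity is equivalent to the invariant
`3 σ_j + 2 (j - 1) γ_j = 1`. It holds at `j = m`, where `γ_m = 1 / (2m + 1)`, and it is
preserved because the product telescopes: `(2j + 3) γ_{j+1} = 2 (j - 1) γ_j`.
-/

open Finset

noncomputable def wallisWeight (m j : ℕ) : ℝ :=
  ((m : ℝ) - 1) / 2 * (1 / ((j : ℝ) * ((j : ℝ) - 1))) *
    ∏ i ∈ Icc m j, (2 * (i : ℝ)) / (2 * (i : ℝ) + 1)

theorem two_mul_add_one_mul_wallisWeight_self {m : ℕ} (hm : 2 ≤ m) :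
    (2 * (m : ℝ) + 1) * wallisWeight m m = 1 := by
  have hm' : (2 : ℝ) ≤ m := by exact_mod_cast hm
  have hm1 : (m : ℝ) - 1 ≠ 0 := by linarith
  rw [wallisWeight, Icc_self, prod_singleton]
  field_simp

theorem two_mul_add_three_mul_wallisWeight_succ {m k : ℕ} (hk : 2 ≤ k) (hmk : m ≤ k + 1) :
    (2 * (k : ℝ) + 3) * wallisWeight m (k + 1) = 2 * ((k : ℝ) - 1) * wallisWeight m k := by
  have hk' : (2 : ℝ) ≤ k := by exact_mod_cast hk
  have hk0 : (k : ℝ) ≠ 0 := (by linarith : (0 : ℝ) < k).ne'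
  have hk1 : (k : ℝ) - 1 ≠ 0 := by linarith
  rw [wallisWeight, wallisWeight, prod_Icc_succ_top hmk]
  generalize ∏ i ∈ Icc m k, (2 * (i : ℝ)) / (2 * (i : ℝ) + 1) = P
  push_cast
  rw [add_sub_cancel_right]
  field_simp
  ring

theorem three_mul_sum_Icc_add_eq_one {g : ℕ → ℝ} {m : ℕ}
    (hbase : (2 * (m : ℝ) + 1) * g m = 1)
    (hstep : ∀ k, m ≤ k → (2 * (k : ℝ) + 3) * g (k + 1) = 2 * ((k : ℝ) - 1) * g k)
    {j : ℕ} (hj : m ≤ j) :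
    3 * ∑ i ∈ Icc m j, g i + 2 * ((j : ℝ) - 1) * g j = 1 := by
  induction j, hj using Nat.le_induction with
  | base =>
    rw [Icc_self, sum_singleton]
    linear_combination hbase
  | succ k hk ih =>
    rw [sum_Icc_succ_top (by omega)]
    push_cast
    linear_combination ih + hstep k hk

theorem statement8_general (m n : ℕ) (hm : 2 ≤ m)
    (γ : ℕ → ℝ)
    (hγ : ∀ j, m ≤ j → j ≤ n - 2 →
      γ j = ((m : ℝ) - 1) / 2 * (1 / ((j : ℝ) * ((j : ℝ) - 1))) *
        ∏ i ∈ Finset.Icc m j, (2 * (i : ℝ)) / (2 * (i : ℝ) + 1))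
    (σ : ℕ → ℝ)
    (hσ : ∀ j, m - 1 ≤ j → j ≤ n - 2 → σ j = ∑ i ∈ Finset.Icc m j, γ i)
    (j : ℕ) (hj1 : m ≤ j) (hj2 : j ≤ n - 2) :
    (j : ℝ) * (1 - σ j) - ((j : ℝ) - 1) * (1 - σ (j - 1)) = (1 + σ j) / 2 := by
  have hσ_eq : σ j = ∑ i ∈ Icc m j, wallisWeight m i :=
    (hσ j (by omega) hj2).trans <| sum_congr rfl fun i hi =>
      hγ i (mem_Icc.1 hi).1 ((mem_Icc.1 hi).2.trans hj2)
  have hσ_pred : σ j = σ (j - 1) + γ j := by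
    obtain ⟨k, rfl⟩ : ∃ k, j = k + 1 := ⟨j - 1, by omega⟩
    rw [hσ (k + 1) (by omega) hj2, Nat.add_sub_cancel, hσ k (by omega) (by omega),
      sum_Icc_succ_top (by omega)]
  have key := three_mul_sum_Icc_add_eq_one (two_mul_add_one_mul_wallisWeight_self hm)
    (fun k hk => two_mul_add_three_mul_wallisWeight_succ (hm.trans hk) (by omega)) hj1
  have hγ_eq : γ j = wallisWeight m j := hγ j hj1 hj2
  rw [← hσ_eq, ← hγ_eq] at key
  linear_combination (1 - (j : ℝ)) * hσ_pred - key / 2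

/-- The recursion `j(1 − σ_j) − (j−1)(1 − σ_{j−1}) = (1 + σ_j)/2` for
`γ_j = ((m−1)/2) · 1/(j(j−1)) · ∏_{i=m}^{j} (2i)/(2i+1)` and `σ_j = Σ_{i=m}^{j} γ_i`. -/
theorem statement8 (m n : ℕ) (hm : 2 ≤ m) (hmn : m ≤ n - 2)
    (γ : ℕ → ℝ)
    (hγ : ∀ j, m ≤ j → j ≤ n - 2 →
      γ j = ((m : ℝ) - 1) / 2 * (1 / ((j : ℝ) * ((j : ℝ) - 1))) *
        ∏ i ∈ Finset.Icc m j, (2 * (i : ℝ)) / (2 * (i : ℝ) + 1))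
    (σ : ℕ → ℝ)
    (hσ : ∀ j, m - 1 ≤ j → j ≤ n - 2 → σ j = ∑ i ∈ Finset.Icc m j, γ i)
    (j : ℕ) (hj1 : m ≤ j) (hj2 : j ≤ n - 2) :
    (j : ℝ) * (1 - σ j) - ((j : ℝ) - 1) * (1 - σ (j - 1)) = (1 + σ j) / 2 :=
  statement8_general m n hm γ hγ σ hσ j hj1 hj2
end

section
/- Fix integers m and n with 2 ≤ m ≤ n−2. For each integer j with m ≤ j ≤ n−2 define γ_j := ((m−1)/2) · 1/(j(j−1)) · ∏_{i=m}^{j} (2i)/(2i+1), and for m−1 ≤ j ≤ n−2 define σ_j := Σ_{i=m}^{j} γ_i (so σ_{m−1} = 0). Then for every integer j with m ≤ j ≤ n−1 one has (j−1)(1 − σ_{j−1}) = (2(j−1) + (m−1)·∏_{i=m}^{j−1} (2i)/(2i+1))/3, where the empty product (when j = m) equals 1. -/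
/-!
Write `P_j` for the partial product and `T_j := j (1 - σ_j)`. Then
`T_{j+1} = (j+1)/j · T_j - (j+1) γ_{j+1}`, and the closed form `(2j + (m-1) P_j)/3` obeys the
same recursion because `(j+1)/j · (1/3 - 1/(2j+3)) = (1/3) · 2(j+1)/(2j+3)`: the coefficient of
`P_j` picks up exactly the next factor of the product. Induction starts at `T_{m-1} = m - 1`.
-/

open Finset

noncomputable def wallisProd (m j : ℕ) : ℝ :=
  ∏ i ∈ Icc m j, (2 * (i : ℝ)) / (2 * (i : ℝ) + 1)

lemma wallisProd_of_lt {m j : ℕ} (h : j < m) : wallisProd m j = 1 := by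
  rw [wallisProd, Icc_eq_empty (by omega), prod_empty]

lemma wallisProd_succ {m j : ℕ} (h : m ≤ j + 1) :
    wallisProd m (j + 1) = wallisProd m j * (2 * ((j : ℝ) + 1) / (2 * ((j : ℝ) + 1) + 1)) := by
  rw [wallisProd, prod_Icc_succ_top h, wallisProd]
  push_cast
  ring

lemma mul_one_sub_sum_wallis (m : ℕ) (hm : 2 ≤ m) {j : ℕ} (hj : m - 1 ≤ j) :
    (j : ℝ) * (1 - ∑ i ∈ Icc m j,
      ((m : ℝ) - 1) / 2 * (1 / ((i : ℝ) * ((i : ℝ) - 1))) * wallisProd m i) =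
      (2 * (j : ℝ) + ((m : ℝ) - 1) * wallisProd m j) / 3 := by
  induction j, hj using Nat.le_induction with
  | base =>
    rw [Icc_eq_empty (by omega), sum_empty, wallisProd_of_lt (by omega),
      Nat.cast_sub (by omega)]
    ring
  | succ j hj ih =>
    have hj0 : (j : ℝ) ≠ 0 := by exact_mod_cast (show j ≠ 0 by omega)
    rw [sum_Icc_succ_top (by omega), wallisProd_succ (by omega)]
    set S := ∑ i ∈ Icc m j, ((m : ℝ) - 1) / 2 * (1 / ((i : ℝ) * ((i : ℝ) - 1))) * wallisProd m i
    push_cast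
    rw [add_sub_cancel_right]
    field_simp
    linear_combination 3 * (2 * (j : ℝ) + 3) * ih

theorem statement9_general (m n : ℕ) (hm : 2 ≤ m)
    (γ : ℕ → ℝ)
    (hγ : ∀ j, m ≤ j → j ≤ n - 2 →
      γ j = ((m : ℝ) - 1) / 2 * (1 / ((j : ℝ) * ((j : ℝ) - 1))) *
        ∏ i ∈ Finset.Icc m j, (2 * (i : ℝ)) / (2 * (i : ℝ) + 1))
    (σ : ℕ → ℝ)
    (hσ : ∀ j, m - 1 ≤ j → j ≤ n - 2 → σ j = ∑ i ∈ Finset.Icc m j, γ i)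
    (j : ℕ) (hj1 : m ≤ j) (hj2 : j ≤ n - 1) :
    ((j : ℝ) - 1) * (1 - σ (j - 1)) =
      (2 * ((j : ℝ) - 1) +
        ((m : ℝ) - 1) * ∏ i ∈ Finset.Icc m (j - 1), (2 * (i : ℝ)) / (2 * (i : ℝ) + 1)) / 3 := by
  have hσγ : σ (j - 1) = ∑ i ∈ Icc m (j - 1),
      ((m : ℝ) - 1) / 2 * (1 / ((i : ℝ) * ((i : ℝ) - 1))) * wallisProd m i := by
    rw [hσ (j - 1) (by omega) (by omega)]
    refine sum_congr rfl fun i hi ↦ ?_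
    rw [mem_Icc] at hi
    exact hγ i hi.1 (by omega)
  have hcast : ((j - 1 : ℕ) : ℝ) = (j : ℝ) - 1 := by
    rw [Nat.cast_sub (by omega), Nat.cast_one]
  rw [hσγ, ← hcast]
  exact mul_one_sub_sum_wallis m hm (by omega)

/-- Closed form `(j−1)(1 − σ_{j−1}) = (2(j−1) + (m−1)·∏_{i=m}^{j−1} (2i)/(2i+1))/3` for
`γ_j = ((m−1)/2) · 1/(j(j−1)) · ∏_{i=m}^{j} (2i)/(2i+1)` and `σ_j = Σ_{i=m}^{j} γ_i`. -/
theorem statement9 (m n : ℕ) (hm : 2 ≤ m) (hmn : m ≤ n - 2)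
    (γ : ℕ → ℝ)
    (hγ : ∀ j, m ≤ j → j ≤ n - 2 →
      γ j = ((m : ℝ) - 1) / 2 * (1 / ((j : ℝ) * ((j : ℝ) - 1))) *
        ∏ i ∈ Finset.Icc m j, (2 * (i : ℝ)) / (2 * (i : ℝ) + 1))
    (σ : ℕ → ℝ)
    (hσ : ∀ j, m - 1 ≤ j → j ≤ n - 2 → σ j = ∑ i ∈ Finset.Icc m j, γ i)
    (j : ℕ) (hj1 : m ≤ j) (hj2 : j ≤ n - 1) :
    ((j : ℝ) - 1) * (1 - σ (j - 1)) =
      (2 * ((j : ℝ) - 1) +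
        ((m : ℝ) - 1) * ∏ i ∈ Finset.Icc m (j - 1), (2 * (i : ℝ)) / (2 * (i : ℝ) + 1)) / 3 :=
  statement9_general m n hm γ hγ σ hσ j hj1 hj2
end
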